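/- arXiv:2407.04358 — 2 statements merged into one kernel-verified Lean document; each statement's English description precedes it below -/
import Mathlib

section
/- Let f = (1/N) Σ_{i=1}^N f_i where each f_i : ℝ^d → ℝ is non-negative, differentiable and L-smooth (possibly non-convex), with f_i(x) > 0 for all i and x, and let f* = inf_x f(x). Let Δ²_noise = sup_x (1/N) Σ_{i=1}^N ‖∇f(x) − ∇f_i(x)‖² and assume it is finite. Run the stochastic NGN iteration with parameter σ satisfying 0 < σ ≤ 1/(2L) from initial point x⁰ for K steps. Then E[(1/K) Σ_{k=0}^{K−1} ‖∇f(x^k)‖²] ≤ 12 (f(x⁰) − f*)/(σK) + 18 σ L Δ²_noise. -/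
set_option maxHeartbeats 1000000


open scoped RealInnerProductSpace

/-- One step of the stochastic NGN method on component `i` with parameter `σ`. -/
noncomputable def ngnStep {d N : ℕ} (f : Fin N → EuclideanSpace ℝ (Fin d) → ℝ) (σ : ℝ)
    (i : Fin N) (x : EuclideanSpace ℝ (Fin d)) : EuclideanSpace ℝ (Fin d) :=
  x - (σ / (1 + σ / (2 * f i x) * ‖gradient (f i) x‖ ^ 2)) • gradient (f i) x

/-- Trajectory of the stochastic NGN iteration. -/
noncomputable def ngnTraj {d N : ℕ} (f : Fin N → EuclideanSpace ℝ (Fin d) → ℝ) (σ : ℕ → ℝ)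
    (x0 : EuclideanSpace ℝ (Fin d)) (ω : ℕ → Fin N) : ℕ → EuclideanSpace ℝ (Fin d)
  | 0 => x0
  | k + 1 => ngnStep f (σ k) (ω k) (ngnTraj f σ x0 ω k)

/-- Extend a finite index sequence to all of `ℕ`. -/
def extendSeq {N K : ℕ} (hN : 0 < N) (ω : Fin K → Fin N) (n : ℕ) : Fin N :=
  if h : n < K then ω ⟨n, h⟩ else ⟨0, hN⟩


section NGNAux
variable {E : Type*} [NormedAddCommGroup E] [InnerProductSpace ℝ E] [CompleteSpace E]

lemma ngn_hasDerivAt_path (F : E → ℝ) (hF : Differentiable ℝ F) (x v : E) (t : ℝ) :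
    HasDerivAt (fun s : ℝ => F (x + s • v)) ⟪gradient F (x + t • v), v⟫ t := by
  have hpath : HasDerivAt (fun s : ℝ => x + s • v) v t := by
    simpa using ((hasDerivAt_id t).smul_const v).const_add x
  have hG : HasGradientAt F (gradient F (x + t • v)) (x + t • v) :=
    (hF _).hasGradientAt
  have hfd : HasFDerivAt F (InnerProductSpace.toDual ℝ E (gradient F (x + t • v))) (x + t • v) :=
    (hasGradientAt_iff_hasFDerivAt).1 hG
  have := hfd.comp_hasDerivAt t hpath
  simpa [Function.comp_def] using this

/-- Descent lemma. -/

lemma ngn_descent (F : E → ℝ) (hF : Differentiable ℝ F) (L : ℝ) (hL : 0 ≤ L)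
    (hLip : ∀ a b, ‖gradient F a - gradient F b‖ ≤ L * ‖a - b‖) (x y : E) :
    F y ≤ F x + ⟪gradient F x, y - x⟫ + L / 2 * ‖y - x‖ ^ 2 := by
  set v := y - x with hv
  have hgradcont : Continuous fun z : E => gradient F z := by
    have : LipschitzWith (Real.toNNReal L) fun z => gradient F z := by
      apply LipschitzWith.of_dist_le_mul
      intro a b
      simpa [dist_eq_norm, Real.coe_toNNReal L hL] using hLip a b
    exact this.continuous
  have hcont : Continuous fun t : ℝ => ⟪gradient F (x + t • v), v⟫ := by
    exact (hgradcont.comp (by continuity)).inner continuous_const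
  have hFTC : F (x + (1:ℝ) • v) - F (x + (0:ℝ) • v)
      = ∫ t in (0:ℝ)..1, ⟪gradient F (x + t • v), v⟫ := by
    rw [intervalIntegral.integral_eq_sub_of_hasDerivAt
      (fun t _ => ngn_hasDerivAt_path F hF x v t) (hcont.intervalIntegrable 0 1)]
  have hexp : F y = F x + ∫ t in (0:ℝ)..1, ⟪gradient F (x + t • v), v⟫ := by
    have h0 : x + (0:ℝ) • v = x := by simp
    have h1 : x + (1:ℝ) • v = y := by simp [hv]
    rw [h0, h1] at hFTC; linarith
  have hbound : ∫ t in (0:ℝ)..1, ⟪gradient F (x + t • v), v⟫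
      ≤ ∫ t in (0:ℝ)..1, (⟪gradient F x, v⟫ + L * t * ‖v‖ ^ 2) := by
    apply intervalIntegral.integral_mono_on (by norm_num)
      (hcont.intervalIntegrable 0 1)
      (((by fun_prop : Continuous fun t : ℝ => ⟪gradient F x, v⟫ + L * t * ‖v‖ ^ 2)).intervalIntegrable 0 1)
    intro t ht
    have h1 : ⟪gradient F (x + t • v), v⟫ - ⟪gradient F x, v⟫
        = ⟪gradient F (x + t • v) - gradient F x, v⟫ := by
      rw [inner_sub_left]
    have h2 : ⟪gradient F (x + t • v) - gradient F x, v⟫ ≤ L * t * ‖v‖ ^ 2 := by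
      calc ⟪gradient F (x + t • v) - gradient F x, v⟫
          ≤ ‖gradient F (x + t • v) - gradient F x‖ * ‖v‖ := real_inner_le_norm _ _
        _ ≤ (L * ‖x + t • v - x‖) * ‖v‖ := by
            have := hLip (x + t • v) x
            nlinarith [norm_nonneg v]
        _ = L * t * ‖v‖ ^ 2 := by
            have : ‖x + t • v - x‖ = t * ‖v‖ := by
              simp [norm_smul, abs_of_nonneg ht.1]
            rw [this]; ring
    linarith
  have hint : ∫ t in (0:ℝ)..1, (⟪gradient F x, v⟫ + L * t * ‖v‖ ^ 2)
      = ⟪gradient F x, v⟫ + L / 2 * ‖v‖ ^ 2 := by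
    rw [intervalIntegral.integral_add (intervalIntegrable_const)
      (((by fun_prop : Continuous fun t : ℝ => L * t * ‖v‖ ^ 2)).intervalIntegrable 0 1)]
    simp only [intervalIntegral.integral_const, smul_eq_mul]
    have : ∫ t in (0:ℝ)..1, L * t * ‖v‖ ^ 2 = L / 2 * ‖v‖ ^ 2 := by
      have : (fun t : ℝ => L * t * ‖v‖ ^ 2) = fun t : ℝ => (L * ‖v‖ ^ 2) * t := by
        funext t; ring
      rw [this, intervalIntegral.integral_const_mul, integral_id]
      ring
    rw [this]; ring
  rw [hexp]
  have := hbound.trans_eq hint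
  linarith

lemma ngn_grad_sq_le (F : E → ℝ) (hF : Differentiable ℝ F) (L : ℝ) (hL : 0 < L)
    (hLip : ∀ a b, ‖gradient F a - gradient F b‖ ≤ L * ‖a - b‖)
    (hnn : ∀ z, 0 ≤ F z) (x : E) : ‖gradient F x‖ ^ 2 ≤ 2 * L * F x := by
  have h := ngn_descent F hF L hL.le hLip x (x - L⁻¹ • gradient F x)
  have hy : x - L⁻¹ • gradient F x - x = -(L⁻¹ • gradient F x) := by abel
  rw [hy] at h
  have hip : ⟪gradient F x, -(L⁻¹ • gradient F x)⟫ = -(L⁻¹ * ‖gradient F x‖ ^ 2) := by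
    rw [inner_neg_right, real_inner_smul_right, real_inner_self_eq_norm_sq]
  have hn : ‖-(L⁻¹ • gradient F x)‖ ^ 2 = L⁻¹ ^ 2 * ‖gradient F x‖ ^ 2 := by
    rw [norm_neg, norm_smul]
    simp [abs_of_nonneg (inv_nonneg.2 hL.le), mul_pow]
  rw [hip, hn] at h
  have h0 := hnn (x - L⁻¹ • gradient F x)
  have key : L / 2 * (L⁻¹ ^ 2 * ‖gradient F x‖ ^ 2) = L⁻¹ * ‖gradient F x‖ ^ 2 / 2 := by
    field_simp
  have h2 : L⁻¹ * ‖gradient F x‖ ^ 2 ≤ 2 * F x := by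
    rw [key] at h
    linarith
  calc ‖gradient F x‖ ^ 2 = L * (L⁻¹ * ‖gradient F x‖ ^ 2) := by field_simp
    _ ≤ L * (2 * F x) := mul_le_mul_of_nonneg_left h2 hL.le
    _ = 2 * L * F x := by ring

/-- gradient of the average -/

lemma ngn_gradient_avg {N : ℕ} (f : Fin N → E → ℝ) (hdiff : ∀ i, Differentiable ℝ (f i))
    (fbar : E → ℝ) (hfbar : ∀ z, fbar z = (N : ℝ)⁻¹ * ∑ i, f i z) (z : E) :
    gradient fbar z = (N : ℝ)⁻¹ • ∑ i, gradient (f i) z := by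
  have hfe : fbar = fun z => (N : ℝ)⁻¹ * ∑ i, f i z := funext hfbar
  have hG : HasGradientAt fbar ((N : ℝ)⁻¹ • ∑ i, gradient (f i) z) z := by
    rw [hasGradientAt_iff_hasFDerivAt]
    have hfd : ∀ i, HasFDerivAt (f i)
        (InnerProductSpace.toDual ℝ E (gradient (f i) z)) z := fun i =>
      (hasGradientAt_iff_hasFDerivAt).1 ((hdiff i z).hasGradientAt)
    have hsum : HasFDerivAt (fun z => ∑ i, f i z)
        (∑ i, InnerProductSpace.toDual ℝ E (gradient (f i) z)) z :=
      HasFDerivAt.fun_sum (fun i _ => hfd i)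
    have h1 := hsum.const_smul ((N : ℝ)⁻¹)
    have heq : (((N:ℝ)⁻¹ • ∑ i, InnerProductSpace.toDual ℝ E (gradient (f i) z)) : E →L[ℝ] ℝ)
        = InnerProductSpace.toDual ℝ E ((N:ℝ)⁻¹ • ∑ i, gradient (f i) z) := by
      rw [map_smul, map_sum]
    rw [hfe, ← heq]
    exact h1
  exact hG.gradient

lemma ngn_gradient_avg_lip {N : ℕ} (hN : 0 < N) (f : Fin N → E → ℝ)
    (hdiff : ∀ i, Differentiable ℝ (f i)) (L : ℝ) (hL : 0 ≤ L)
    (hsmooth : ∀ i a b, ‖gradient (f i) a - gradient (f i) b‖ ≤ L * ‖a - b‖)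
    (fbar : E → ℝ) (hfbar : ∀ z, fbar z = (N : ℝ)⁻¹ * ∑ i, f i z) (a b : E) :
    ‖gradient fbar a - gradient fbar b‖ ≤ L * ‖a - b‖ := by
  rw [ngn_gradient_avg f hdiff fbar hfbar a, ngn_gradient_avg f hdiff fbar hfbar b,
    ← smul_sub, ← Finset.sum_sub_distrib]
  rw [norm_smul]
  have hNpos : (0:ℝ) < N := Nat.cast_pos.2 hN
  calc ‖(N:ℝ)⁻¹‖ * ‖∑ i, (gradient (f i) a - gradient (f i) b)‖
      ≤ (N:ℝ)⁻¹ * ∑ i, ‖gradient (f i) a - gradient (f i) b‖ := by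
        rw [Real.norm_eq_abs, abs_of_nonneg (inv_nonneg.2 hNpos.le)]
        exact mul_le_mul_of_nonneg_left (norm_sum_le _ _) (inv_nonneg.2 hNpos.le)
    _ ≤ (N:ℝ)⁻¹ * ∑ _i : Fin N, L * ‖a - b‖ := by
        apply mul_le_mul_of_nonneg_left _ (inv_nonneg.2 hNpos.le)
        exact Finset.sum_le_sum fun i _ => hsmooth i a b
    _ = L * ‖a - b‖ := by
        rw [Finset.sum_const, Finset.card_univ, Fintype.card_fin]
        field_simp
        rw [nsmul_eq_mul]
        ring

end NGNAux

lemma ngn_step_bound {d N : ℕ} (hN : 0 < N)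
    (f : Fin N → EuclideanSpace ℝ (Fin d) → ℝ) (L σ : ℝ) (hL : 0 < L)
    (hσ : 0 < σ) (hσL : σ ≤ 1 / (2 * L))
    (hdiff : ∀ i, Differentiable ℝ (f i))
    (hpos : ∀ i x, 0 < f i x)
    (hsmooth : ∀ i x y, ‖gradient (f i) x - gradient (f i) y‖ ≤ L * ‖x - y‖)
    (fbar : EuclideanSpace ℝ (Fin d) → ℝ)
    (hfbar : ∀ z, fbar z = (N : ℝ)⁻¹ * ∑ i, f i z)
    (noise : EuclideanSpace ℝ (Fin d) → ℝ)
    (hnoise : ∀ z, noise z = (N : ℝ)⁻¹ * ∑ i, ‖gradient fbar z - gradient (f i) z‖ ^ 2)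
    (x : EuclideanSpace ℝ (Fin d)) :
    (N : ℝ)⁻¹ * ∑ i, fbar (ngnStep f σ i x)
      ≤ fbar x - σ / 4 * ‖gradient fbar x‖ ^ 2 + σ ^ 2 * L * noise x := by
  have hNpos : (0:ℝ) < N := Nat.cast_pos.2 hN
  have hfbardiff : Differentiable ℝ fbar := by
    have : fbar = fun z => (N : ℝ)⁻¹ * ∑ i, f i z := funext hfbar
    rw [this]
    exact Differentiable.const_mul (Differentiable.fun_sum fun i _ => hdiff i) _
  have hfbarlip := ngn_gradient_avg_lip hN f hdiff L hL.le hsmooth fbar hfbar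
  have hσL' : σ * L ≤ 1 / 2 := by
    rw [le_div_iff₀ (by positivity)] at hσL
    nlinarith
  set h := gradient fbar x with hh
  set g : Fin N → EuclideanSpace ℝ (Fin d) := fun i => gradient (f i) x with hg
  -- per-index bound
  have per : ∀ i, fbar (ngnStep f σ i x)
      ≤ fbar x - σ * ⟪h, g i⟫ + σ ^ 2 * L / 2 * ‖h‖ ^ 2 + σ ^ 2 * L * ‖g i‖ ^ 2 := by
    intro i
    set θ := σ / (2 * f i x) * ‖g i‖ ^ 2 with hθ
    set γ := σ / (1 + θ) with hγ
    have hfpos := hpos i x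
    have hθnn : 0 ≤ θ := by positivity
    have hgsq : ‖g i‖ ^ 2 ≤ 2 * L * f i x :=
      ngn_grad_sq_le (f i) (hdiff i) L hL (hsmooth i) (fun z => (hpos i z).le) x
    have hθle : θ ≤ σ * L := by
      rw [hθ, div_mul_eq_mul_div, div_le_iff₀ (by positivity)]
      nlinarith
    have hγnn : 0 ≤ γ := by positivity
    have hγle : γ ≤ σ := by
      rw [hγ, div_le_iff₀ (by linarith)]
      nlinarith
    have hγlow : σ - γ ≤ σ ^ 2 * L := by
      have : σ - γ = σ * θ / (1 + θ) := by
        rw [hγ]; field_simp; ring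
      rw [this]
      have h1 : σ * θ / (1 + θ) ≤ σ * θ := by
        apply div_le_self (by positivity) (by linarith)
      nlinarith
    have hdesc := ngn_descent fbar hfbardiff L hL.le hfbarlip x (ngnStep f σ i x)
    have hstep : ngnStep f σ i x - x = -(γ • g i) := by
      simp only [ngnStep, hγ, hθ, hg]
      abel
    rw [hstep] at hdesc
    have hip : ⟪h, -(γ • g i)⟫ = -(γ * ⟪h, g i⟫) := by
      rw [inner_neg_right, real_inner_smul_right]
    have hnrm : ‖-(γ • g i)‖ ^ 2 = γ ^ 2 * ‖g i‖ ^ 2 := by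
      rw [norm_neg, norm_smul, Real.norm_eq_abs, mul_pow, sq_abs]
    rw [hip, hnrm] at hdesc
    have habs : |⟪h, g i⟫| ≤ (‖h‖ ^ 2 + ‖g i‖ ^ 2) / 2 := by
      have h1 := abs_real_inner_le_norm h (g i)
      nlinarith [sq_nonneg (‖h‖ - ‖g i‖)]
    have hb1 : -(γ * ⟪h, g i⟫) ≤ -(σ * ⟪h, g i⟫) + σ ^ 2 * L * ((‖h‖ ^ 2 + ‖g i‖ ^ 2) / 2) := by
      have e1 : -(γ * ⟪h, g i⟫) + σ * ⟪h, g i⟫ = (σ - γ) * ⟪h, g i⟫ := by ring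
      have e2 : (σ - γ) * ⟪h, g i⟫ ≤ (σ - γ) * |⟪h, g i⟫| := by
        apply mul_le_mul_of_nonneg_left (le_abs_self _) (by linarith)
      have e3 : (σ - γ) * |⟪h, g i⟫| ≤ σ ^ 2 * L * ((‖h‖ ^ 2 + ‖g i‖ ^ 2) / 2) := by
        apply mul_le_mul hγlow habs (abs_nonneg _) (by positivity)
      linarith
    have hγ2 : γ ^ 2 ≤ σ ^ 2 := pow_le_pow_left₀ hγnn hγle 2
    have hb2 : L / 2 * (γ ^ 2 * ‖g i‖ ^ 2) ≤ σ ^ 2 * L / 2 * ‖g i‖ ^ 2 := by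
      nlinarith [mul_nonneg (mul_nonneg hL.le (sub_nonneg.2 hγ2)) (sq_nonneg ‖g i‖)]
    calc fbar (ngnStep f σ i x)
        ≤ fbar x + -(γ * ⟪h, g i⟫) + L / 2 * (γ ^ 2 * ‖g i‖ ^ 2) := hdesc
      _ ≤ fbar x + (-(σ * ⟪h, g i⟫) + σ ^ 2 * L * ((‖h‖ ^ 2 + ‖g i‖ ^ 2) / 2))
            + σ ^ 2 * L / 2 * ‖g i‖ ^ 2 := by linarith
      _ = fbar x - σ * ⟪h, g i⟫ + σ ^ 2 * L / 2 * ‖h‖ ^ 2 + σ ^ 2 * L * ‖g i‖ ^ 2 := by ring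
  -- identities
  have hsumg : ∑ i, g i = (N : ℝ) • h := by
    rw [hh, ngn_gradient_avg f hdiff fbar hfbar, smul_smul]
    rw [mul_inv_cancel₀ hNpos.ne', one_smul]
  have hA : ∑ i, ⟪h, g i⟫ = (N : ℝ) * ‖h‖ ^ 2 := by
    rw [← inner_sum, hsumg, real_inner_smul_right, real_inner_self_eq_norm_sq]
  have hB : ∑ i, ‖g i‖ ^ 2 = (N : ℝ) * noise x + (N : ℝ) * ‖h‖ ^ 2 := by
    have hexp : ∀ i, ‖h - g i‖ ^ 2 = ‖h‖ ^ 2 - 2 * ⟪h, g i⟫ + ‖g i‖ ^ 2 := by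
      intro i
      rw [norm_sub_sq_real]
    have : ∑ i, ‖h - g i‖ ^ 2 = ∑ i, ‖g i‖ ^ 2 - (N : ℝ) * ‖h‖ ^ 2 := by
      rw [Finset.sum_congr rfl fun i _ => hexp i, Finset.sum_add_distrib,
        Finset.sum_sub_distrib, Finset.sum_const, Finset.card_univ, Fintype.card_fin,
        ← Finset.mul_sum, hA]
      push_cast
      ring
    have hnx : noise x = (N : ℝ)⁻¹ * ∑ i, ‖h - g i‖ ^ 2 := hnoise x
    rw [this] at hnx
    field_simp at hnx
    linarith
  have hnoisenn : 0 ≤ noise x := by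
    rw [hnoise]
    positivity
  -- sum the per-index bounds
  have hsum : ∑ i, fbar (ngnStep f σ i x)
      ≤ ∑ i, (fbar x - σ * ⟪h, g i⟫ + σ ^ 2 * L / 2 * ‖h‖ ^ 2 + σ ^ 2 * L * ‖g i‖ ^ 2) :=
    Finset.sum_le_sum fun i _ => per i
  have hsum2 : ∑ i, (fbar x - σ * ⟪h, g i⟫ + σ ^ 2 * L / 2 * ‖h‖ ^ 2 + σ ^ 2 * L * ‖g i‖ ^ 2)
      = (N : ℝ) * fbar x - σ * ((N : ℝ) * ‖h‖ ^ 2) + (N : ℝ) * (σ ^ 2 * L / 2 * ‖h‖ ^ 2)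
        + σ ^ 2 * L * ((N : ℝ) * noise x + (N : ℝ) * ‖h‖ ^ 2) := by
    simp only [Finset.sum_add_distrib, Finset.sum_sub_distrib, Finset.sum_const,
      Finset.card_univ, Fintype.card_fin, ← Finset.mul_sum, hA, hB]
    push_cast
    ring
  have hfinal : (N : ℝ)⁻¹ * ∑ i, fbar (ngnStep f σ i x)
      ≤ fbar x - σ * ‖h‖ ^ 2 + σ ^ 2 * L / 2 * ‖h‖ ^ 2 + σ ^ 2 * L * (noise x + ‖h‖ ^ 2) := by
    have htr := hsum.trans_eq hsum2
    rw [inv_mul_le_iff₀ hNpos]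
    calc ∑ i, fbar (ngnStep f σ i x) ≤ _ := htr
      _ = (N:ℝ) * (fbar x - σ * ‖h‖ ^ 2 + σ ^ 2 * L / 2 * ‖h‖ ^ 2
          + σ ^ 2 * L * (noise x + ‖h‖ ^ 2)) := by ring
  have hcoef : σ ^ 2 * L / 2 * ‖h‖ ^ 2 + σ ^ 2 * L * ‖h‖ ^ 2 ≤ 3 / 4 * σ * ‖h‖ ^ 2 := by
    nlinarith [sq_nonneg ‖h‖, mul_nonneg (mul_nonneg hσ.le (by linarith : (0:ℝ) ≤ 1/2 - σ * L)) (sq_nonneg ‖h‖)]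
  calc (N : ℝ)⁻¹ * ∑ i, fbar (ngnStep f σ i x)
      ≤ fbar x - σ * ‖h‖ ^ 2 + σ ^ 2 * L / 2 * ‖h‖ ^ 2 + σ ^ 2 * L * (noise x + ‖h‖ ^ 2) := hfinal
    _ ≤ fbar x - σ / 4 * ‖h‖ ^ 2 + σ ^ 2 * L * noise x := by nlinarith [hcoef]
    _ = fbar x - σ / 4 * ‖gradient fbar x‖ ^ 2 + σ ^ 2 * L * noise x := by rw [hh]

lemma ngn_traj_congr {d N : ℕ} (f : Fin N → EuclideanSpace ℝ (Fin d) → ℝ) (σs : ℕ → ℝ)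
    (x0 : EuclideanSpace ℝ (Fin d)) (ω ω' : ℕ → Fin N) :
    ∀ k, (∀ j, j < k → ω j = ω' j) → ngnTraj f σs x0 ω k = ngnTraj f σs x0 ω' k := by
  intro k
  induction k with
  | zero => intro _; rfl
  | succ k ih =>
    intro hj
    show ngnStep f (σs k) (ω k) _ = ngnStep f (σs k) (ω' k) _
    rw [ih (fun j hj' => hj j (Nat.lt_succ_of_lt hj')), hj k (Nat.lt_succ_self k)]

/-- One-step expectation inequality. -/

lemma ngn_exp_step {d N K : ℕ} (hN : 0 < N)
    (f : Fin N → EuclideanSpace ℝ (Fin d) → ℝ) (L σ : ℝ) (hL : 0 < L)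
    (hσ : 0 < σ) (hσL : σ ≤ 1 / (2 * L))
    (hdiff : ∀ i, Differentiable ℝ (f i))
    (hpos : ∀ i x, 0 < f i x)
    (hsmooth : ∀ i x y, ‖gradient (f i) x - gradient (f i) y‖ ≤ L * ‖x - y‖)
    (fbar : EuclideanSpace ℝ (Fin d) → ℝ)
    (hfbar : ∀ z, fbar z = (N : ℝ)⁻¹ * ∑ i, f i z)
    (noise : EuclideanSpace ℝ (Fin d) → ℝ)
    (hnoise : ∀ z, noise z = (N : ℝ)⁻¹ * ∑ i, ‖gradient fbar z - gradient (f i) z‖ ^ 2)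
    (x0 : EuclideanSpace ℝ (Fin d)) (Δ : ℝ) (hΔ : ∀ z, noise z ≤ Δ)
    (k : ℕ) (hk : k < K) :
    (∑ ω : Fin K → Fin N, fbar (ngnTraj f (fun _ => σ) x0 (extendSeq hN ω) (k + 1)))
      + σ / 4 * ∑ ω : Fin K → Fin N,
          ‖gradient fbar (ngnTraj f (fun _ => σ) x0 (extendSeq hN ω) k)‖ ^ 2
    ≤ (∑ ω : Fin K → Fin N, fbar (ngnTraj f (fun _ => σ) x0 (extendSeq hN ω) k))
      + (N : ℝ) ^ K * (σ ^ 2 * L * Δ) := by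
  classical
  set X : (Fin K → Fin N) → ℕ → EuclideanSpace ℝ (Fin d) :=
    fun ω => ngnTraj f (fun _ => σ) x0 (extendSeq hN ω) with hX
  set κ : Fin K := ⟨k, hk⟩ with hκ
  set e := Equiv.funSplitAt κ (Fin N) with he
  set Y : ({j : Fin K // j ≠ κ} → Fin N) → EuclideanSpace ℝ (Fin d) :=
    fun r => X (e.symm (⟨0, hN⟩, r)) k with hY
  have hXsame : ∀ (i : Fin N) (r : {j : Fin K // j ≠ κ} → Fin N),
      X (e.symm (i, r)) k = Y r := by
    intro i r
    apply ngn_traj_congr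
    intro j hj
    unfold extendSeq
    by_cases hjK : j < K
    · simp only [dif_pos hjK]
      have hne : (⟨j, hjK⟩ : Fin K) ≠ κ := by
        intro hcon
        rw [hκ] at hcon
        have : j = k := congrArg Fin.val hcon
        omega
      rw [he]
      simp [Equiv.funSplitAt, Equiv.piSplitAt, dif_neg hne]
    · simp only [dif_neg hjK]
  have hXsucc : ∀ (i : Fin N) (r : {j : Fin K // j ≠ κ} → Fin N),
      X (e.symm (i, r)) (k + 1) = ngnStep f σ i (Y r) := by
    intro i r
    have hval : extendSeq hN (e.symm (i, r)) k = i := by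
      unfold extendSeq
      rw [dif_pos hk]
      show e.symm (i, r) κ = i
      rw [he]
      simp [Equiv.funSplitAt, Equiv.piSplitAt]
    show ngnStep f σ (extendSeq hN (e.symm (i, r)) k) (X (e.symm (i, r)) k) = _
    rw [hval, hXsame]
  -- rewrite sums via the equivalence
  have hsum_eq : ∀ G : EuclideanSpace ℝ (Fin d) → ℝ, ∀ m : ℕ,
      ∑ ω : Fin K → Fin N, G (X ω m)
        = ∑ p : Fin N × ({j : Fin K // j ≠ κ} → Fin N), G (X (e.symm p) m) := by
    intro G m
    exact (Equiv.sum_comp e.symm fun ω => G (X ω m)).symm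
  have h1 : ∑ ω : Fin K → Fin N, fbar (X ω (k + 1))
      = ∑ r : {j : Fin K // j ≠ κ} → Fin N, ∑ i : Fin N, fbar (ngnStep f σ i (Y r)) := by
    rw [hsum_eq fbar (k + 1), Fintype.sum_prod_type, Finset.sum_comm]
    apply Finset.sum_congr rfl
    intro r _
    apply Finset.sum_congr rfl
    intro i _
    rw [hXsucc]
  have h2 : ∀ G : EuclideanSpace ℝ (Fin d) → ℝ,
      ∑ ω : Fin K → Fin N, G (X ω k)
        = ∑ r : {j : Fin K // j ≠ κ} → Fin N, (N : ℝ) * G (Y r) := by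
    intro G
    rw [hsum_eq G k, Fintype.sum_prod_type, Finset.sum_comm]
    apply Finset.sum_congr rfl
    intro r _
    rw [Finset.sum_congr rfl fun i _ => by rw [hXsame i r]]
    rw [Finset.sum_const, Finset.card_univ, Fintype.card_fin, nsmul_eq_mul]
  have hNpos : (0:ℝ) < N := Nat.cast_pos.2 hN
  have hstep : ∀ r : {j : Fin K // j ≠ κ} → Fin N,
      ∑ i : Fin N, fbar (ngnStep f σ i (Y r))
        ≤ (N : ℝ) * (fbar (Y r) - σ / 4 * ‖gradient fbar (Y r)‖ ^ 2 + σ ^ 2 * L * Δ) := by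
    intro r
    have hsb := ngn_step_bound hN f L σ hL hσ hσL hdiff hpos hsmooth fbar hfbar
      noise hnoise (Y r)
    have h3 : fbar (Y r) - σ / 4 * ‖gradient fbar (Y r)‖ ^ 2 + σ ^ 2 * L * noise (Y r)
        ≤ fbar (Y r) - σ / 4 * ‖gradient fbar (Y r)‖ ^ 2 + σ ^ 2 * L * Δ := by
      have := hΔ (Y r)
      nlinarith [sq_nonneg σ, hL.le, mul_nonneg (mul_nonneg (sq_nonneg σ) hL.le) (sub_nonneg.2 (hΔ (Y r)))]
    rw [← inv_mul_le_iff₀ hNpos]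
    exact hsb.trans h3
  have hcard : (Fintype.card ({j : Fin K // j ≠ κ} → Fin N) : ℝ) * (N : ℝ) = (N : ℝ) ^ K := by
    rw [Fintype.card_fun]
    have hcs : Fintype.card {j : Fin K // j ≠ κ} = K - 1 := by
      simp [Fintype.card_subtype_compl]
    rw [hcs, Fintype.card_fin]
    push_cast
    rw [← pow_succ]
    congr 1
    omega
  calc (∑ ω : Fin K → Fin N, fbar (X ω (k + 1)))
        + σ / 4 * ∑ ω : Fin K → Fin N, ‖gradient fbar (X ω k)‖ ^ 2
      = (∑ r, ∑ i : Fin N, fbar (ngnStep f σ i (Y r)))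
        + σ / 4 * ∑ r, (N : ℝ) * ‖gradient fbar (Y r)‖ ^ 2 := by
        rw [h1, h2 (fun z => ‖gradient fbar z‖ ^ 2)]
    _ ≤ (∑ r, (N : ℝ) * (fbar (Y r) - σ / 4 * ‖gradient fbar (Y r)‖ ^ 2 + σ ^ 2 * L * Δ))
        + σ / 4 * ∑ r, (N : ℝ) * ‖gradient fbar (Y r)‖ ^ 2 := by
        have := Finset.sum_le_sum fun r (_ : r ∈ Finset.univ) => hstep r
        linarith
    _ = ∑ r, ((N : ℝ) * fbar (Y r) + (N : ℝ) * (σ ^ 2 * L * Δ)) := by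
        rw [Finset.mul_sum, ← Finset.sum_add_distrib]
        apply Finset.sum_congr rfl
        intro r _
        ring
    _ = (∑ r, (N : ℝ) * fbar (Y r))
        + (Fintype.card ({j : Fin K // j ≠ κ} → Fin N) : ℝ) * ((N : ℝ) * (σ ^ 2 * L * Δ)) := by
        rw [Finset.sum_add_distrib, Finset.sum_const, Finset.card_univ, nsmul_eq_mul]
    _ = (∑ ω : Fin K → Fin N, fbar (X ω k)) + (N : ℝ) ^ K * (σ ^ 2 * L * Δ) := by
        rw [h2 fbar]
        congr 1
        rw [← hcard]
        ring

/-- Convergence of stochastic NGN in the (possibly non-convex) smooth case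
with `0 < σ ≤ 1/(2L)`:
`E[(1/K) Σ_{k<K} ‖∇f(x^k)‖²] ≤ 12(f(x⁰) − f*)/(σK) + 18σL Δ²_noise`, where
`Δ²_noise = sup_x (1/N) Σᵢ ‖∇f(x) − ∇fᵢ(x)‖²` is assumed finite.  The expectation over
the i.i.d. uniform index sequence is written as the average over all `ω : Fin K → Fin N`. -/
theorem ngn_stochastic_nonconvex_rate {d N K : ℕ} (hN : 0 < N) (hK : 0 < K)
    (f : Fin N → EuclideanSpace ℝ (Fin d) → ℝ) (L σ : ℝ) (hL : 0 < L)
    (hσ : 0 < σ) (hσL : σ ≤ 1 / (2 * L))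
    (hdiff : ∀ i, Differentiable ℝ (f i))
    (hpos : ∀ i x, 0 < f i x)
    (hsmooth : ∀ i x y, ‖gradient (f i) x - gradient (f i) y‖ ≤ L * ‖x - y‖)
    (fbar : EuclideanSpace ℝ (Fin d) → ℝ)
    (hfbar : ∀ z, fbar z = (N : ℝ)⁻¹ * ∑ i, f i z)
    (noise : EuclideanSpace ℝ (Fin d) → ℝ)
    (hnoise : ∀ z, noise z = (N : ℝ)⁻¹ * ∑ i, ‖gradient fbar z - gradient (f i) z‖ ^ 2)
    (hbdd : BddAbove (Set.range noise))
    (x0 : EuclideanSpace ℝ (Fin d)) :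
    (1 / (N : ℝ) ^ K) *
        ∑ ω : Fin K → Fin N,
          ((K : ℝ)⁻¹ * ∑ k ∈ Finset.range K,
            ‖gradient fbar (ngnTraj f (fun _ => σ) x0 (extendSeq hN ω) k)‖ ^ 2) ≤
      12 * (fbar x0 - ⨅ y, fbar y) / (σ * K) + 18 * σ * L * (⨆ z, noise z) := by
  classical
  have hNpos : (0:ℝ) < N := Nat.cast_pos.2 hN
  have hKpos : (0:ℝ) < K := Nat.cast_pos.2 hK
  have hNK : (0:ℝ) < (N : ℝ) ^ K := pow_pos hNpos K
  set X : (Fin K → Fin N) → ℕ → EuclideanSpace ℝ (Fin d) :=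
    fun ω => ngnTraj f (fun _ => σ) x0 (extendSeq hN ω) with hX
  set Δ : ℝ := ⨆ z, noise z with hΔdef
  have hΔ : ∀ z, noise z ≤ Δ := fun z => le_ciSup hbdd z
  have hnoisenn : ∀ z, 0 ≤ noise z := by
    intro z
    rw [hnoise]
    positivity
  have hΔnn : 0 ≤ Δ := le_trans (hnoisenn x0) (hΔ x0)
  have hfbarnn : ∀ z, 0 ≤ fbar z := by
    intro z
    rw [hfbar]
    exact mul_nonneg (by positivity) (Finset.sum_nonneg fun i _ => (hpos i z).le)
  set fstar : ℝ := ⨅ y, fbar y with hfstar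
  have hbddbelow : BddBelow (Set.range fbar) := ⟨0, fun v ⟨z, hz⟩ => hz ▸ hfbarnn z⟩
  have hstar_le : ∀ z, fstar ≤ fbar z := fun z => ciInf_le hbddbelow z
  have hcardω : (Fintype.card (Fin K → Fin N) : ℝ) = (N : ℝ) ^ K := by
    rw [Fintype.card_fun, Fintype.card_fin, Fintype.card_fin]
    push_cast
    rfl
  -- telescoping
  have tele : ∀ m, m ≤ K →
      (∑ ω : Fin K → Fin N, fbar (X ω m))
        + σ / 4 * ∑ k ∈ Finset.range m, ∑ ω : Fin K → Fin N, ‖gradient fbar (X ω k)‖ ^ 2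
      ≤ (N : ℝ) ^ K * fbar x0 + m * ((N : ℝ) ^ K * (σ ^ 2 * L * Δ)) := by
    intro m
    induction m with
    | zero =>
      intro _
      simp only [Finset.range_zero, Finset.sum_empty, mul_zero, Nat.cast_zero, zero_mul, add_zero]
      have : ∀ ω : Fin K → Fin N, fbar (X ω 0) = fbar x0 := fun ω => rfl
      rw [Finset.sum_congr rfl fun ω _ => this ω, Finset.sum_const, Finset.card_univ,
        nsmul_eq_mul, hcardω]
    | succ m ih =>
      intro hm
      have hmK : m < K := Nat.lt_of_succ_le hm
      have hstep := ngn_exp_step hN f L σ hL hσ hσL hdiff hpos hsmooth fbar hfbar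
        noise hnoise x0 Δ hΔ m hmK
      have ih' := ih (Nat.le_of_lt hmK)
      rw [Finset.sum_range_succ]
      push_cast
      have hXfold : ∀ ω, ngnTraj f (fun _ => σ) x0 (extendSeq hN ω) = X ω := fun ω => rfl
      simp only [hXfold] at hstep
      nlinarith [hstep, ih']
  have hfinal := tele K le_rfl
  have hKsum : (N : ℝ) ^ K * fstar ≤ ∑ ω : Fin K → Fin N, fbar (X ω K) := by
    calc (N : ℝ) ^ K * fstar
        = ∑ _ω : Fin K → Fin N, fstar := by
          rw [Finset.sum_const, Finset.card_univ, nsmul_eq_mul, hcardω]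
      _ ≤ ∑ ω : Fin K → Fin N, fbar (X ω K) :=
          Finset.sum_le_sum fun ω _ => hstar_le (X ω K)
  set T : ℝ := ∑ k ∈ Finset.range K, ∑ ω : Fin K → Fin N, ‖gradient fbar (X ω k)‖ ^ 2
    with hT
  have hTnn : 0 ≤ T := by
    apply Finset.sum_nonneg
    intro k _
    apply Finset.sum_nonneg
    intro ω _
    positivity
  have hTbound : σ / 4 * T ≤ (N : ℝ) ^ K * (fbar x0 - fstar) + K * ((N : ℝ) ^ K * (σ ^ 2 * L * Δ)) := by
    nlinarith [hfinal, hKsum]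
  -- rewrite the LHS
  have hLHS : (1 / (N : ℝ) ^ K) *
      ∑ ω : Fin K → Fin N, ((K : ℝ)⁻¹ * ∑ k ∈ Finset.range K, ‖gradient fbar (X ω k)‖ ^ 2)
      = T / ((K : ℝ) * (N : ℝ) ^ K) := by
    rw [← Finset.mul_sum, Finset.sum_comm, ← hT]
    ring
  rw [hLHS]
  have hgap : 0 ≤ fbar x0 - fstar := by linarith [hstar_le x0]
  have hb1 : T / ((K : ℝ) * (N : ℝ) ^ K) ≤ 4 * (fbar x0 - fstar) / (σ * K) + 4 * σ * L * Δ := by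
    rw [div_le_iff₀ (by positivity)]
    have h4 : T ≤ (4 / σ) * ((N : ℝ) ^ K * (fbar x0 - fstar) + K * ((N : ℝ) ^ K * (σ ^ 2 * L * Δ))) := by
      have hmul := mul_le_mul_of_nonneg_left hTbound (by positivity : (0:ℝ) ≤ 4 / σ)
      calc T = 4 / σ * (σ / 4 * T) := by field_simp
        _ ≤ _ := hmul
    calc T ≤ (4 / σ) * ((N : ℝ) ^ K * (fbar x0 - fstar) + K * ((N : ℝ) ^ K * (σ ^ 2 * L * Δ))) := h4
      _ = (4 * (fbar x0 - fstar) / (σ * K) + 4 * σ * L * Δ) * ((K : ℝ) * (N : ℝ) ^ K) := by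
          field_simp
  have hq : 0 ≤ (fbar x0 - fstar) / (σ * K) := by positivity
  have hs : 0 ≤ σ * L * Δ := by positivity
  calc T / ((K : ℝ) * (N : ℝ) ^ K)
      ≤ 4 * (fbar x0 - fstar) / (σ * K) + 4 * σ * L * Δ := hb1
    _ ≤ 12 * (fbar x0 - fstar) / (σ * K) + 18 * σ * L * Δ := by
        rw [mul_div_assoc, mul_div_assoc]
        nlinarith [hq, hs]
end

section
/- Let g : ℝ^d → ℝ be non-negative, differentiable and L-smooth, let x ∈ ℝ^d with g(x) > 0, let σ > 0, and let γ = σ / (1 + (σ/(2 g(x))) ‖∇g(x)‖²) be the NGN stepsize. Then there exists ξ ∈ [0, 1] such that γ = σ/(σL + 1) + (σ²L/(σL + 1)) ξ; that is, γ lies in the interval [σ/(σL+1), σ] and its deviation from the deterministic lower bound σ/(σL+1) is at most σ²L/(σL+1). -/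
open scoped RealInnerProductSpace

/-- Descent lemma along a ray. -/
lemma ngn_descent_aux {d : ℕ} (g : EuclideanSpace ℝ (Fin d) → ℝ)
    (L : ℝ) (hdiff : Differentiable ℝ g)
    (hsmooth : ∀ x y, ‖gradient g x - gradient g y‖ ≤ L * ‖x - y‖)
    (x v : EuclideanSpace ℝ (Fin d)) (t : ℝ) (ht : 0 ≤ t) :
    g (x + t • v) ≤ g x + t * ⟪gradient g x, v⟫ + L / 2 * ‖v‖ ^ 2 * t ^ 2 := by
  set c : ℝ := ⟪gradient g x, v⟫ with hc
  set φ : ℝ → ℝ := fun s => g (x + s • v) - s * c - L / 2 * ‖v‖ ^ 2 * s ^ 2 with hφ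
  have hf : ∀ s : ℝ, HasDerivAt (fun s : ℝ => g (x + s • v))
      ⟪gradient g (x + s • v), v⟫ s := by
    intro s
    have h1 : HasDerivAt (fun s : ℝ => x + s • v) v s := by
      simpa using ((hasDerivAt_id s).smul_const v).const_add x
    have h2 := (hdiff (x + s • v)).hasGradientAt
    have := h2.hasFDerivAt.comp_hasDerivAt s h1
    simpa [real_inner_comm, Function.comp_def] using this
  have hφ' : ∀ s : ℝ, HasDerivAt φ
      (⟪gradient g (x + s • v), v⟫ - c - L / 2 * ‖v‖ ^ 2 * (2 * s)) s := by
    intro s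
    have h3 : HasDerivAt (fun s : ℝ => s * c) c s := by
      simpa using (hasDerivAt_id s).mul_const c
    have h4 : HasDerivAt (fun s : ℝ => L / 2 * ‖v‖ ^ 2 * s ^ 2)
        (L / 2 * ‖v‖ ^ 2 * (2 * s)) s := by
      have := (hasDerivAt_pow 2 s).const_mul (L / 2 * ‖v‖ ^ 2)
      simpa [pow_one, mul_assoc] using this
    exact ((hf s).sub h3).sub h4
  have hanti : AntitoneOn φ (Set.Icc 0 t) := by
    apply antitoneOn_of_deriv_nonpos (convex_Icc 0 t)
    · exact fun s _ => ((hφ' s).continuousAt).continuousWithinAt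
    · exact fun s _ => ((hφ' s).differentiableAt).differentiableWithinAt
    · intro s hs
      rw [interior_Icc] at hs
      rw [(hφ' s).deriv]
      have hbound : ⟪gradient g (x + s • v) - gradient g x, v⟫ ≤ L * s * ‖v‖ ^ 2 := by
        calc ⟪gradient g (x + s • v) - gradient g x, v⟫
            ≤ ‖gradient g (x + s • v) - gradient g x‖ * ‖v‖ := real_inner_le_norm _ _
          _ ≤ (L * ‖(x + s • v) - x‖) * ‖v‖ := by
              gcongr; exact hsmooth _ _
          _ = L * s * ‖v‖ ^ 2 := by
              have : ‖(x + s • v) - x‖ = |s| * ‖v‖ := by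
                simp [norm_smul, Real.norm_eq_abs]
              rw [this, abs_of_nonneg hs.1.le]; ring
      have : ⟪gradient g (x + s • v) - gradient g x, v⟫
          = ⟪gradient g (x + s • v), v⟫ - c := by
        rw [inner_sub_left]
      nlinarith [hbound, this]
  have h0 : φ t ≤ φ 0 := hanti (Set.mem_Icc.2 ⟨le_refl 0, ht⟩) (Set.mem_Icc.2 ⟨ht, le_refl t⟩) ht
  simp only [hφ] at h0
  simp only [zero_smul, add_zero, zero_mul, sub_zero, pow_two, mul_zero, zero_pow] at h0
  nlinarith [h0]

lemma ngn_grad_sq_le_s16 {d : ℕ} (g : EuclideanSpace ℝ (Fin d) → ℝ)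
    (L : ℝ) (hL : 0 ≤ L) (hdiff : Differentiable ℝ g)
    (hnonneg : ∀ y, 0 ≤ g y)
    (hsmooth : ∀ x y, ‖gradient g x - gradient g y‖ ≤ L * ‖x - y‖)
    (x : EuclideanSpace ℝ (Fin d)) (hx : 0 < g x) :
    ‖gradient g x‖ ^ 2 ≤ 2 * L * g x := by
  by_contra h
  push_neg at h
  have hgx : 0 ≤ g x := hnonneg x
  have hn : 0 < ‖gradient g x‖ ^ 2 := by nlinarith
  set n : ℝ := ‖gradient g x‖ ^ 2 with hn'
  set t : ℝ := 2 * g x / n with htdef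
  have ht : 0 ≤ t := by positivity
  have hd := ngn_descent_aux g L hdiff hsmooth x (-(gradient g x)) t ht
  have hinner : ⟪gradient g x, -(gradient g x)⟫ = -n := by
    rw [inner_neg_right, real_inner_self_eq_norm_sq]
  have hnorm : ‖-(gradient g x)‖ ^ 2 = n := by rw [norm_neg]
  rw [hinner, hnorm] at hd
  have h0 := hnonneg (x + t • -(gradient g x))
  have ht' : 0 < t := by positivity
  have htn : t * n = 2 * g x := by
    rw [htdef, div_mul_cancel₀ _ hn.ne']
  have hnt2 : n * t ^ 2 = 2 * g x * t := by
    rw [pow_two, ← mul_assoc, mul_comm n t, htn]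
  nlinarith [h0, hd, htn, hnt2, hx, h, mul_pos hx hn, mul_pos hx ht']

/-- Decomposition of the NGN stepsize: there is `ξ ∈ [0,1]` with
`γ = σ/(σL+1) + (σ²L/(σL+1)) ξ`; in particular `γ ∈ [σ/(σL+1), σ]` and the deviation of
`γ` from `σ/(σL+1)` is at most `σ²L/(σL+1)`. -/
theorem ngn_stepsize_decomposition {d : ℕ} (g : EuclideanSpace ℝ (Fin d) → ℝ)
    (L σ : ℝ) (hL : 0 ≤ L) (hσ : 0 < σ)
    (hdiff : Differentiable ℝ g)
    (hnonneg : ∀ y, 0 ≤ g y)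
    (hsmooth : ∀ x y, ‖gradient g x - gradient g y‖ ≤ L * ‖x - y‖)
    (x : EuclideanSpace ℝ (Fin d)) (hx : 0 < g x)
    (γ : ℝ) (hγ : γ = σ / (1 + σ / (2 * g x) * ‖gradient g x‖ ^ 2)) :
    (∃ ξ : ℝ, 0 ≤ ξ ∧ ξ ≤ 1 ∧ γ = σ / (σ * L + 1) + σ ^ 2 * L / (σ * L + 1) * ξ) ∧
      (σ / (σ * L + 1) ≤ γ ∧ γ ≤ σ) ∧
      γ - σ / (σ * L + 1) ≤ σ ^ 2 * L / (σ * L + 1) := by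
  have hkey := ngn_grad_sq_le_s16 g L hL hdiff hnonneg hsmooth x hx
  set K : ℝ := ‖gradient g x‖ ^ 2 / (2 * g x) with hK
  have hK0 : 0 ≤ K := by positivity
  have hKL : K ≤ L := by
    rw [hK, div_le_iff₀ (by linarith)]
    linarith [hkey]
  have hγ' : γ = σ / (1 + σ * K) := by
    rw [hγ, hK]
    congr 1
    field_simp
  have hden : (0:ℝ) < 1 + σ * K := by nlinarith
  have hdenL : (0:ℝ) < σ * L + 1 := by nlinarith
  have hAγ : σ / (σ * L + 1) ≤ γ := by
    rw [hγ']
    apply div_le_div_of_nonneg_left hσ.le hden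
    nlinarith [mul_le_mul_of_nonneg_left hKL hσ.le]
  have hγσ : γ ≤ σ := by
    rw [hγ']
    calc σ / (1 + σ * K) ≤ σ / 1 := by
          apply div_le_div_of_nonneg_left hσ.le one_pos
          nlinarith [mul_nonneg hσ.le hK0]
      _ = σ := div_one σ
  have hAB : σ / (σ * L + 1) + σ ^ 2 * L / (σ * L + 1) = σ := by
    field_simp
    ring
  refine ⟨?_, ⟨hAγ, hγσ⟩, by linarith⟩
  rcases eq_or_lt_of_le hL with hL0 | hLpos
  · refine ⟨0, le_refl 0, zero_le_one, ?_⟩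
    rw [← hL0] at hKL
    have hK0' : K = 0 := le_antisymm hKL hK0
    rw [hγ', hK0', ← hL0]
    norm_num
  · have hB : (0:ℝ) < σ ^ 2 * L / (σ * L + 1) := by positivity
    refine ⟨(γ - σ / (σ * L + 1)) / (σ ^ 2 * L / (σ * L + 1)), ?_, ?_, ?_⟩
    · apply div_nonneg (by linarith) hB.le
    · rw [div_le_one hB]
      linarith
    · have hxi : σ ^ 2 * L / (σ * L + 1) * ((γ - σ / (σ * L + 1)) / (σ ^ 2 * L / (σ * L + 1)))
          = γ - σ / (σ * L + 1) := by
        rw [mul_comm, div_mul_cancel₀ _ hB.ne']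
      linarith
end
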